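/- arXiv:0809.3553 — 2 statements merged into one kernel-verified Lean document; each statement's English description precedes it below -/
import Mathlib

section
/- Let ν > 0, a > 0, c ≠ 0, β = (2π)²ν, and define g(t) = (1/2)ct²/(a−t) for t < a. Define on ℝ³ × [0,a): u₁(x,t) = e^{−βt}·2π(sin(2π(x₂+g(t))) + cos(2π(x₃+g(t)))) − g'(t), u₂ and u₃ by cyclic permutation of the indices, and p(x,t) = −e^{−2βt}(2π)²[sin(2π(x₁+g(t)))cos(2π(x₂+g(t))) + sin(2π(x₂+g(t)))cos(2π(x₃+g(t))) + sin(2π(x₃+g(t)))cos(2π(x₁+g(t)))] + g''(t)(x₁+x₂+x₃). Then (u,p) is C^∞ on ℝ³ × [0,a), satisfies ∂u_i/∂t + Σ_j u_j ∂u_i/∂x_j = ν Δu_i − ∂p/∂x_i and div u = 0 there, u(x,0) equals the field u⁰ with u⁰₁(x) = 2π sin(2πx₂)+2π cos(2πx₃) (and cyclic permutations), u is periodic in space with period 1, and for every fixed x ∈ ℝ³ the function t ↦ |u₁(x,t)| tends to +∞ as t → a⁻; in particular u admits no continuous extension to ℝ³ × [0,a]. -/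
/-!
The velocity is the Arnold–Beltrami–Childress flow `U` with `A = B = C = 2π`: it satisfies
`curl U = -2π U`, so `(U·∇)U = ∇(|U|²/2)` and `ΔU = -(2π)² U`. Damping it by `e^{-βt}` with
`β = (2π)² ν` balances the viscous term, and the Galilean change of frame `x ↦ x + g(t)(1,1,1)`
with the boost `-g'(t)(1,1,1)` keeps the Navier–Stokes equations valid for any twice
differentiable `g`, at the price of the pressure term `g''(t)(x₁ + x₂ + x₃)`. For
`g(t) = ct²/(2(a - t))` the boost `g'(t)` is unbounded as `t → a⁻`, while the oscillating part
of `u` stays bounded by `4π`.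
-/

open Real

/-- Partial derivative of `f : ℝ³ → ℝ` in the `j`-th coordinate direction. -/
noncomputable def pd (f : (Fin 3 → ℝ) → ℝ) (j : Fin 3) (x : Fin 3 → ℝ) : ℝ :=
  fderiv ℝ f x (Pi.single j 1)

/-- Spatial Laplacian of `f : ℝ³ → ℝ`. -/
noncomputable def lap (f : (Fin 3 → ℝ) → ℝ) (x : Fin 3 → ℝ) : ℝ :=
  ∑ j : Fin 3, pd (pd f j) j x

/-- One-sided (within `[0,∞)`) time derivative. -/
noncomputable def td (f : ℝ → ℝ) (t : ℝ) : ℝ :=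
  derivWithin f (Set.Ici 0) t

open Filter Topology Set
open scoped ContDiff

/-- `abcVelocity β g i` is the paper's `u_{i+1}`; addition in `Fin 3` performs the cyclic
permutation of indices. -/
noncomputable def abcVelocity (β : ℝ) (g : ℝ → ℝ) (i : Fin 3) (x : Fin 3 → ℝ) (t : ℝ) : ℝ :=
  exp (-β * t) * (2 * π) * (sin (2 * π * (x (i + 1) + g t)) + cos (2 * π * (x (i + 2) + g t)))
    - deriv g t

noncomputable def abcPressure (β : ℝ) (g : ℝ → ℝ) (x : Fin 3 → ℝ) (t : ℝ) : ℝ :=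
  -exp (-(2 * β) * t) * (2 * π) ^ 2 *
      ∑ k : Fin 3, sin (2 * π * (x k + g t)) * cos (2 * π * (x (k + 1) + g t))
    + deriv (deriv g) t * ∑ k : Fin 3, x k

section Calculus

attribute [local simp] fderiv_sin fderiv_cos fderiv_const_mul fderiv_fun_add fderiv_fun_sub
  fderiv_fun_mul fderiv_sub_const fderiv_add_const fderiv_apply Pi.single_apply

lemma pd_abcVelocity (β : ℝ) (g : ℝ → ℝ) (i j : Fin 3) (x : Fin 3 → ℝ) (t : ℝ) :
    pd (fun y => abcVelocity β g i y t) j x = exp (-β * t) * (2 * π) ^ 2 *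
      ((if i + 1 = j then cos (2 * π * (x (i + 1) + g t)) else 0)
        - (if i + 2 = j then sin (2 * π * (x (i + 2) + g t)) else 0)) := by
  simp (disch := fun_prop) [pd, abcVelocity]
  split_ifs <;> ring

lemma lap_abcVelocity (β : ℝ) (g : ℝ → ℝ) (i : Fin 3) (x : Fin 3 → ℝ) (t : ℝ) :
    lap (fun y => abcVelocity β g i y t) x
      = -(2 * π) ^ 2 * (abcVelocity β g i x t + deriv g t) := by
  have hpd (j : Fin 3) : pd (fun y => abcVelocity β g i y t) j = fun x =>
      exp (-β * t) * (2 * π) ^ 2 *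
        ((if i + 1 = j then cos (2 * π * (x (i + 1) + g t)) else 0)
          - (if i + 2 = j then sin (2 * π * (x (i + 2) + g t)) else 0)) :=
    funext fun y => pd_abcVelocity β g i j y t
  simp only [lap, hpd, Fin.sum_univ_three]
  fin_cases i <;> simp (disch := fun_prop) [pd, abcVelocity] <;> ring

lemma sum_pd_abcVelocity (β : ℝ) (g : ℝ → ℝ) (x : Fin 3 → ℝ) (t : ℝ) :
    ∑ i : Fin 3, pd (fun y => abcVelocity β g i y t) i x = 0 := by
  simp [pd_abcVelocity]

lemma pd_abcPressure (β : ℝ) (g : ℝ → ℝ) (i : Fin 3) (x : Fin 3 → ℝ) (t : ℝ) :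
    pd (fun y => abcPressure β g y t) i x = -exp (-(2 * β) * t) * (2 * π) ^ 3 *
      (cos (2 * π * (x i + g t)) * cos (2 * π * (x (i + 1) + g t))
        - sin (2 * π * (x (i + 2) + g t)) * sin (2 * π * (x i + g t))) + deriv (deriv g) t := by
  fin_cases i <;> simp (disch := fun_prop) [pd, abcPressure, Fin.sum_univ_three] <;> ring

variable {β : ℝ} {g : ℝ → ℝ} {t : ℝ}

lemma differentiableAt_abcVelocity (hg : DifferentiableAt ℝ g t)
    (hg' : DifferentiableAt ℝ (deriv g) t) (i : Fin 3) (x : Fin 3 → ℝ) :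
    DifferentiableAt ℝ (abcVelocity β g i x) t := by
  unfold abcVelocity
  fun_prop

lemma deriv_abcVelocity (hg : DifferentiableAt ℝ g t) (hg' : DifferentiableAt ℝ (deriv g) t)
    (i : Fin 3) (x : Fin 3 → ℝ) :
    deriv (abcVelocity β g i x) t =
      -β * (abcVelocity β g i x t + deriv g t) + exp (-β * t) * (2 * π) ^ 2 * deriv g t *
        (cos (2 * π * (x (i + 1) + g t)) - sin (2 * π * (x (i + 2) + g t)))
      - deriv (deriv g) t := by
  unfold abcVelocity
  simp (disch := fun_prop) [_root_.deriv_sin, _root_.deriv_cos]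
  ring

theorem abcVelocity_navierStokes {ν : ℝ} (hβ : β = (2 * π) ^ 2 * ν)
    (hg : DifferentiableAt ℝ g t) (hg' : DifferentiableAt ℝ (deriv g) t) (x : Fin 3 → ℝ)
    (i : Fin 3) :
    deriv (abcVelocity β g i x) t
        + ∑ j : Fin 3, abcVelocity β g j x t * pd (fun y => abcVelocity β g i y t) j x
      = ν * lap (fun y => abcVelocity β g i y t) x - pd (fun y => abcPressure β g y t) i x := by
  have hexp : exp (-(2 * β) * t) = exp (-β * t) * exp (-β * t) := by
    rw [← exp_add]
    ring_nf
  rw [deriv_abcVelocity hg hg', lap_abcVelocity, pd_abcPressure, hexp, hβ]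
  simp only [pd_abcVelocity, Fin.sum_univ_three]
  fin_cases i <;> simp [abcVelocity] <;> ring

end Calculus

lemma abcVelocity_add_single (β : ℝ) (g : ℝ → ℝ) (i j : Fin 3) (x : Fin 3 → ℝ) (t : ℝ) :
    abcVelocity β g i (x + Pi.single j 1) t = abcVelocity β g i x t := by
  have shift (k : Fin 3) (G : ℝ) : 2 * π * ((x + Pi.single j 1 : Fin 3 → ℝ) k + G)
      = 2 * π * (x k + G) + ((Pi.single j 1 : Fin 3 → ℤ) k : ℝ) * (2 * π) := by
    simp only [Pi.add_apply, Pi.single_apply]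
    split_ifs <;> push_cast <;> ring
  simp only [abcVelocity, shift, sin_add_int_mul_two_pi, cos_add_int_mul_two_pi]

lemma abcVelocity_zero {β : ℝ} {g : ℝ → ℝ} (hg : g 0 = 0) (hg' : deriv g 0 = 0) (i : Fin 3)
    (x : Fin 3 → ℝ) :
    abcVelocity β g i x 0 = 2 * π * sin (2 * π * x (i + 1)) + 2 * π * cos (2 * π * x (i + 2)) := by
  simp only [abcVelocity, hg, hg', mul_zero, exp_zero, add_zero, sub_zero]
  ring

lemma abs_deriv_sub_le_abs_abcVelocity {β : ℝ} (hβ : 0 ≤ β) (g : ℝ → ℝ) (i : Fin 3)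
    (x : Fin 3 → ℝ) {t : ℝ} (ht : 0 ≤ t) :
    |deriv g t| - 4 * π ≤ |abcVelocity β g i x t| := by
  set s := sin (2 * π * (x (i + 1) + g t))
  set c := cos (2 * π * (x (i + 2) + g t))
  have hdecay : exp (-β * t) ≤ 1 := exp_le_one_iff.2 (by nlinarith)
  have hwave : |exp (-β * t) * (2 * π) * (s + c)| ≤ 4 * π := by
    rw [abs_mul, abs_mul, abs_of_pos (exp_pos _), abs_of_pos two_pi_pos]
    calc exp (-β * t) * (2 * π) * |s + c| ≤ 1 * (2 * π) * (1 + 1) := by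
          gcongr
          exact (abs_add_le s c).trans (add_le_add (abs_sin_le_one _) (abs_cos_le_one _))
      _ = 4 * π := by ring
  have := abs_sub_abs_le_abs_sub (deriv g t) (exp (-β * t) * (2 * π) * (s + c))
  rw [abcVelocity, abs_sub_comm]
  linarith

lemma tendsto_abs_abcVelocity_atTop {β : ℝ} (hβ : 0 ≤ β) {g : ℝ → ℝ} (i : Fin 3)
    (x : Fin 3 → ℝ) {l : Filter ℝ} (hl : ∀ᶠ t in l, 0 ≤ t)
    (hg : Tendsto (fun t => |deriv g t|) l atTop) :
    Tendsto (fun t => |abcVelocity β g i x t|) l atTop := by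
  refine tendsto_atTop_mono' l
    (hl.mono fun t ht => abs_deriv_sub_le_abs_abcVelocity hβ g i x ht) ?_
  simpa only [sub_eq_add_neg] using tendsto_atTop_add_const_right l (-(4 * π)) hg

section Smoothness
variable {s : Set ℝ} {g : ℝ → ℝ}

lemma contDiffOn_sin_cos_phase (hg : ContDiffOn ℝ ∞ g s) (k : Fin 3) :
    ContDiffOn ℝ ∞ (fun q : (Fin 3 → ℝ) × ℝ => sin (2 * π * (q.1 k + g q.2))) (univ ×ˢ s) ∧
    ContDiffOn ℝ ∞ (fun q : (Fin 3 → ℝ) × ℝ => cos (2 * π * (q.1 k + g q.2))) (univ ×ˢ s) := by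
  have hG : ContDiffOn ℝ ∞ (fun q : (Fin 3 → ℝ) × ℝ => g q.2) (univ ×ˢ s) :=
    hg.comp contDiff_snd.contDiffOn fun q hq => hq.2
  have hphase : ContDiffOn ℝ ∞ (fun q : (Fin 3 → ℝ) × ℝ => 2 * π * (q.1 k + g q.2))
      (univ ×ˢ s) :=
    contDiffOn_const.mul (((contDiff_apply ℝ ℝ k).comp contDiff_fst).contDiffOn.add hG)
  exact ⟨contDiff_sin.comp_contDiffOn hphase, contDiff_cos.comp_contDiffOn hphase⟩

lemma contDiffOn_abcVelocity (β : ℝ) (hs : IsOpen s) (hg : ContDiffOn ℝ ∞ g s) (i : Fin 3) :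
    ContDiffOn ℝ ∞ (fun q : (Fin 3 → ℝ) × ℝ => abcVelocity β g i q.1 q.2) (univ ×ˢ s) := by
  have hG' : ContDiffOn ℝ ∞ (fun q : (Fin 3 → ℝ) × ℝ => deriv g q.2) (univ ×ˢ s) :=
    (hg.deriv_of_isOpen hs le_rfl).comp contDiff_snd.contDiffOn fun q hq => hq.2
  have := (contDiffOn_sin_cos_phase hg (i + 1)).1
  have := (contDiffOn_sin_cos_phase hg (i + 2)).2
  unfold abcVelocity
  fun_prop

lemma contDiffOn_abcPressure (β : ℝ) (hs : IsOpen s) (hg : ContDiffOn ℝ ∞ g s) :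
    ContDiffOn ℝ ∞ (fun q : (Fin 3 → ℝ) × ℝ => abcPressure β g q.1 q.2) (univ ×ˢ s) := by
  have hG'' : ContDiffOn ℝ ∞ (fun q : (Fin 3 → ℝ) × ℝ => deriv (deriv g) q.2) (univ ×ˢ s) :=
    ((hg.deriv_of_isOpen hs le_rfl).deriv_of_isOpen hs le_rfl).comp contDiff_snd.contDiffOn
      fun q hq => hq.2
  have hsum : ContDiffOn ℝ ∞ (fun q : (Fin 3 → ℝ) × ℝ => ∑ k : Fin 3,
      sin (2 * π * (q.1 k + g q.2)) * cos (2 * π * (q.1 (k + 1) + g q.2))) (univ ×ˢ s) :=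
    ContDiffOn.sum fun k _ =>
      (contDiffOn_sin_cos_phase hg k).1.mul (contDiffOn_sin_cos_phase hg (k + 1)).2
  unfold abcPressure
  fun_prop

end Smoothness

section Profile
variable {a c : ℝ}

lemma hasDerivAt_profile {t : ℝ} (ht : t ≠ a) :
    HasDerivAt (fun t => 1 / 2 * c * t ^ 2 / (a - t))
      (c / 2 * (t * (2 * a - t)) / (a - t) ^ 2) t := by
  refine (((hasDerivAt_pow 2 t).const_mul (1 / 2 * c)).div
    ((hasDerivAt_id' t).const_sub a) (sub_ne_zero.2 ht.symm)).congr_deriv ?_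
  field_simp
  norm_num
  ring

lemma contDiffOn_profile : ContDiffOn ℝ ∞ (fun t => 1 / 2 * c * t ^ 2 / (a - t)) (Iio a) :=
  ContDiffOn.div (by fun_prop) (by fun_prop) fun _ ht => (sub_pos.2 ht).ne'

lemma tendsto_abs_deriv_profile (ha : a ≠ 0) (hc : c ≠ 0) :
    Tendsto (fun t => |deriv (fun t => 1 / 2 * c * t ^ 2 / (a - t)) t|) (𝓝[<] a) atTop := by
  have hnum : Tendsto (fun t => |c / 2 * (t * (2 * a - t))|) (𝓝[<] a) (𝓝 |c / 2 * a ^ 2|) := by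
    have h : Continuous fun t => |c / 2 * (t * (2 * a - t))| := by fun_prop
    convert (h.tendsto a).mono_left nhdsWithin_le_nhds using 3
    ring
  have hden : Tendsto (fun t => (a - t) ^ 2) (𝓝[<] a) (𝓝[>] 0) := by
    refine tendsto_nhdsWithin_iff.2 ⟨?_, eventually_nhdsWithin_of_forall fun t ht =>
      mem_Ioi.2 (pow_pos (sub_pos.2 ht) 2)⟩
    have h : Continuous fun t : ℝ => (a - t) ^ 2 := by fun_prop
    simpa using (h.tendsto a).mono_left nhdsWithin_le_nhds
  refine (hnum.pos_mul_atTop (by positivity) hden.inv_tendsto_nhdsGT_zero).congr' ?_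
  filter_upwards [self_mem_nhdsWithin] with t ht
  rw [(hasDerivAt_profile (ne_of_lt ht)).deriv, abs_div, abs_of_nonneg (sq_nonneg (a - t)),
    div_eq_mul_inv]
  rfl

end Profile

lemma td_eq_deriv {f : ℝ → ℝ} {t : ℝ} (hf : DifferentiableAt ℝ f t) (ht : 0 ≤ t) :
    td f t = deriv f t :=
  hf.derivWithin (uniqueDiffOn_Ici 0 t ht)

lemma not_continuousOn_Icc_of_tendsto_abs_atTop {f v : ℝ → ℝ} {b a : ℝ} (hba : b < a)
    (hf : Tendsto (fun t => |f t|) (𝓝[<] a) atTop) (hvf : EqOn v f (Ico b a)) :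
    ¬ContinuousOn v (Icc b a) := fun hv => by
  have hva : ContinuousWithinAt v (Iio a) a :=
    (hv a ⟨hba.le, le_rfl⟩).mono_of_mem_nhdsWithin (Icc_mem_nhdsLT hba)
  refine not_tendsto_atTop_of_tendsto_nhds (hva.tendsto.abs.congr' ?_) hf
  filter_upwards [Ico_mem_nhdsLT hba] with t ht
  rw [hvf ht]

/-- The solution of Lemma 1 specialized to `g(t) = (1/2)ct²/(a−t)`: a smooth
solution of Navier–Stokes (zero force) on `ℝ³ × [0,a)`, space-periodic, with
the prescribed initial data, whose first velocity component blows up as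
`t → a⁻`; in particular there is no continuous extension to `ℝ³ × [0,a]`. -/
theorem stmt4 (ν : ℝ) (hν : 0 < ν) (a : ℝ) (ha : 0 < a) (c : ℝ) (hc : c ≠ 0)
    (β : ℝ) (hβ : β = (2 * π) ^ 2 * ν)
    (g : ℝ → ℝ) (hg : g = fun t => (1 / 2) * c * t ^ 2 / (a - t))
    (u : Fin 3 → (Fin 3 → ℝ) → ℝ → ℝ) (p : (Fin 3 → ℝ) → ℝ → ℝ)
    (hu0 : ∀ x t, u 0 x t =
      Real.exp (-β * t) * (2 * π) *
        (Real.sin (2 * π * (x 1 + g t)) + Real.cos (2 * π * (x 2 + g t))) - deriv g t)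
    (hu1 : ∀ x t, u 1 x t =
      Real.exp (-β * t) * (2 * π) *
        (Real.sin (2 * π * (x 2 + g t)) + Real.cos (2 * π * (x 0 + g t))) - deriv g t)
    (hu2 : ∀ x t, u 2 x t =
      Real.exp (-β * t) * (2 * π) *
        (Real.sin (2 * π * (x 0 + g t)) + Real.cos (2 * π * (x 1 + g t))) - deriv g t)
    (hp : ∀ x t, p x t =
      -(Real.exp (-(2 * β) * t)) * (2 * π) ^ 2 *
        (Real.sin (2 * π * (x 0 + g t)) * Real.cos (2 * π * (x 1 + g t)) +
         Real.sin (2 * π * (x 1 + g t)) * Real.cos (2 * π * (x 2 + g t)) +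
         Real.sin (2 * π * (x 2 + g t)) * Real.cos (2 * π * (x 0 + g t))) +
      deriv (deriv g) t * (x 0 + x 1 + x 2)) :
    -- smoothness on ℝ³ × [0,a)
    (∀ i : Fin 3, ContDiffOn ℝ (⊤ : ℕ∞)
      (fun q : (Fin 3 → ℝ) × ℝ => u i q.1 q.2) (Set.univ ×ˢ Set.Ico 0 a)) ∧
    ContDiffOn ℝ (⊤ : ℕ∞)
      (fun q : (Fin 3 → ℝ) × ℝ => p q.1 q.2) (Set.univ ×ˢ Set.Ico 0 a) ∧
    -- Navier–Stokes equations with zero external force on ℝ³ × [0,a)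
    (∀ x : Fin 3 → ℝ, ∀ t : ℝ, t ∈ Set.Ico 0 a → ∀ i : Fin 3,
      td (u i x) t + ∑ j : Fin 3, u j x t * pd (fun y => u i y t) j x =
        ν * lap (fun y => u i y t) x - pd (fun y => p y t) i x) ∧
    -- divergence-free
    (∀ x : Fin 3 → ℝ, ∀ t : ℝ, t ∈ Set.Ico 0 a →
      ∑ i : Fin 3, pd (fun y => u i y t) i x = 0) ∧
    -- initial condition
    (∀ x : Fin 3 → ℝ,
      u 0 x 0 = 2 * π * Real.sin (2 * π * x 1) + 2 * π * Real.cos (2 * π * x 2) ∧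
      u 1 x 0 = 2 * π * Real.sin (2 * π * x 2) + 2 * π * Real.cos (2 * π * x 0) ∧
      u 2 x 0 = 2 * π * Real.sin (2 * π * x 0) + 2 * π * Real.cos (2 * π * x 1)) ∧
    -- space-periodicity with period 1
    (∀ i : Fin 3, ∀ x : Fin 3 → ℝ, ∀ t : ℝ, t ∈ Set.Ico 0 a → ∀ j : Fin 3,
      u i (x + Pi.single j 1) t = u i x t) ∧
    -- blow-up of |u₁(x,·)| as t → a⁻
    (∀ x : Fin 3 → ℝ,
      Filter.Tendsto (fun t => |u 0 x t|) (nhdsWithin a (Set.Iio a)) Filter.atTop) ∧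
    -- no continuous extension to ℝ³ × [0,a]
    ¬(∃ v : Fin 3 → (Fin 3 → ℝ) → ℝ → ℝ,
        (∀ i : Fin 3, ContinuousOn
          (fun q : (Fin 3 → ℝ) × ℝ => v i q.1 q.2) (Set.univ ×ˢ Set.Icc 0 a)) ∧
        (∀ i : Fin 3, ∀ x : Fin 3 → ℝ, ∀ t : ℝ, t ∈ Set.Ico 0 a → v i x t = u i x t)) := by
  obtain rfl : u = abcVelocity β g := by
    funext i x t
    fin_cases i
    exacts [hu0 x t, hu1 x t, hu2 x t]
  obtain rfl : p = abcPressure β g := by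
    funext x t
    simp only [hp, abcPressure, Fin.sum_univ_three]
    rfl
  have hsmooth : ContDiffOn ℝ ∞ g (Iio a) := hg ▸ contDiffOn_profile
  have hsmooth' : ContDiffOn ℝ ∞ (deriv g) (Iio a) := hsmooth.deriv_of_isOpen isOpen_Iio le_rfl
  have hdiff {t : ℝ} (ht : t ∈ Ico 0 a) :
      DifferentiableAt ℝ g t ∧ DifferentiableAt ℝ (deriv g) t :=
    ⟨(hsmooth.differentiableOn (by simp)).differentiableAt (Iio_mem_nhds ht.2),
      (hsmooth'.differentiableOn (by simp)).differentiableAt (Iio_mem_nhds ht.2)⟩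
  have hsub : (univ : Set (Fin 3 → ℝ)) ×ˢ Ico 0 a ⊆ univ ×ˢ Iio a :=
    prod_mono subset_rfl Ico_subset_Iio_self
  have hblowup (x : Fin 3 → ℝ) : Tendsto (fun t => |abcVelocity β g 0 x t|) (𝓝[<] a) atTop :=
    tendsto_abs_abcVelocity_atTop (hβ ▸ by positivity) 0 x
      (mem_of_superset (Ico_mem_nhdsLT ha) fun t ht => ht.1)
      (hg ▸ tendsto_abs_deriv_profile ha.ne' hc)
  have hg0 : g 0 = 0 := by simp [hg]
  have hg'0 : deriv g 0 = 0 := by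
    simpa [hg] using (hasDerivAt_profile (a := a) (c := c) ha.ne).deriv
  refine ⟨fun i => (contDiffOn_abcVelocity β isOpen_Iio hsmooth i).mono hsub,
    (contDiffOn_abcPressure β isOpen_Iio hsmooth).mono hsub, fun x t ht i => ?_,
    fun x t _ => sum_pd_abcVelocity β g x t,
    fun x => ⟨abcVelocity_zero hg0 hg'0 0 x, abcVelocity_zero hg0 hg'0 1 x,
      abcVelocity_zero hg0 hg'0 2 x⟩,
    fun i x t _ j => abcVelocity_add_single β g i j x t, hblowup, ?_⟩
  · rw [td_eq_deriv (differentiableAt_abcVelocity (hdiff ht).1 (hdiff ht).2 i x) ht.1]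
    exact abcVelocity_navierStokes hβ (hdiff ht).1 (hdiff ht).2 x i
  · rintro ⟨v, hv, hvu⟩
    refine not_continuousOn_Icc_of_tendsto_abs_atTop ha (hblowup 0) (fun t => hvu 0 0 t) ?_
    exact (hv 0).comp (continuous_const.prodMk continuous_id).continuousOn
      fun t ht => ⟨mem_univ _, ht⟩
end

section
/- Let ν > 0 and for n = 1,2 let b_{i,n} ∈ ℝ and nonzero α_{i,n} ∈ ℝ (i = 1,2,3) satisfy Σ_{j=1}³ b_{j,n}/α_{j,n} = 0 for n = 1,2, together with b_{i,1}·Σ_{j=1}³ b_{j,2}/α_{j,1} = 1/α_{i,2} and b_{i,2}·Σ_{j=1}³ b_{j,1}/α_{j,2} = 1/α_{i,1} for i = 1,2,3. Set β_n = −ν Σ_{j=1}³ 1/α_{j,n}² for n = 1,2. Define u_i(x,t) = b_{i,1} e^{β₁t} sin(Σ_{s=1}³ x_s/α_{s,1}) + b_{i,2} e^{β₁t} sin(Σ_{s=1}³ x_s/α_{s,2}) and p(x,t) = cos(Σ_{j=1}³ x_j/α_{j,1})·cos(Σ_{j=1}³ x_j/α_{j,2})·e^{(β₁+β₂)t}.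 Then (u,p) is C^∞ on ℝ³ × [0,∞), satisfies ∂u_i/∂t + Σ_j u_j ∂u_i/∂x_j = ν Δu_i − ∂p/∂x_i (zero external force) and div u = 0 everywhere, and u(x,0) = u⁰(x) where u⁰_i(x) = b_{i,1} sin(Σ_s x_s/α_{s,1}) + b_{i,2} sin(Σ_s x_s/α_{s,2}). -/
open Real
open scoped ContDiff

noncomputable def phase {ι : Type*} [Fintype ι] (a : ι → ℝ) : (ι → ℝ) →L[ℝ] ℝ :=
  ∑ s, (a s)⁻¹ • ContinuousLinearMap.proj s

section Phase

variable {ι : Type*} [Fintype ι] (a : ι → ℝ)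

lemma phase_apply (x : ι → ℝ) : phase a x = ∑ s, x s / a s := by
  simp [phase, div_eq_inv_mul]

lemma phase_single [DecidableEq ι] (j : ι) : phase a (Pi.single j 1) = (a j)⁻¹ := by
  simp [phase_apply, Pi.single_apply, ite_div]

lemma hasFDerivAt_sin_phase (x : ι → ℝ) :
    HasFDerivAt (fun y => sin (phase a y)) (cos (phase a x) • phase a) x :=
  (hasDerivAt_sin _).comp_hasFDerivAt x (phase a).hasFDerivAt

lemma hasFDerivAt_cos_phase (x : ι → ℝ) :
    HasFDerivAt (fun y => cos (phase a y)) (-sin (phase a x) • phase a) x :=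
  (hasDerivAt_cos _).comp_hasFDerivAt x (phase a).hasFDerivAt

end Phase

section PartialDerivatives

variable {f : (Fin 3 → ℝ) → ℝ}

lemma pd_eq_of_hasFDerivAt {L : (Fin 3 → ℝ) →L[ℝ] ℝ} {x : Fin 3 → ℝ}
    (h : HasFDerivAt f L x) (j : Fin 3) : pd f j x = L (Pi.single j 1) := by
  rw [pd, h.fderiv]

lemma pd_const_mul (c : ℝ) (j : Fin 3) (x : Fin 3 → ℝ) :
    pd (fun y => c * f y) j x = c * pd f j x := by
  change fderiv ℝ (c • f) x _ = _
  rw [fderiv_const_smul_field]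
  rfl

lemma lap_const_mul (c : ℝ) (x : Fin 3 → ℝ) : lap (fun y => c * f y) x = c * lap f x := by
  simp only [lap, Finset.mul_sum, funext (pd_const_mul (f := f) c _), pd_const_mul]

variable (A B : ℝ) (a c : Fin 3 → ℝ) (j : Fin 3) (x : Fin 3 → ℝ)

lemma pd_sin_add_sin :
    pd (fun y => A * sin (phase a y) + B * sin (phase c y)) j x =
      A * (a j)⁻¹ * cos (phase a x) + B * (c j)⁻¹ * cos (phase c x) := by
  refine (pd_eq_of_hasFDerivAt (((hasFDerivAt_sin_phase a x).const_mul A).add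
    ((hasFDerivAt_sin_phase c x).const_mul B)) j).trans ?_
  simp only [add_apply, smul_apply, phase_single, smul_eq_mul]
  ring

lemma pd_cos_add_cos :
    pd (fun y => A * cos (phase a y) + B * cos (phase c y)) j x =
      -(A * (a j)⁻¹ * sin (phase a x)) - B * (c j)⁻¹ * sin (phase c x) := by
  refine (pd_eq_of_hasFDerivAt (((hasFDerivAt_cos_phase a x).const_mul A).add
    ((hasFDerivAt_cos_phase c x).const_mul B)) j).trans ?_
  simp only [add_apply, smul_apply, phase_single, smul_eq_mul]
  ring

lemma pd_cos_mul_cos :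
    pd (fun y => cos (phase a y) * cos (phase c y)) j x =
      -(sin (phase a x) * cos (phase c x) * (a j)⁻¹) -
        cos (phase a x) * sin (phase c x) * (c j)⁻¹ := by
  refine (pd_eq_of_hasFDerivAt
    ((hasFDerivAt_cos_phase a x).mul (hasFDerivAt_cos_phase c x)) j).trans ?_
  simp only [add_apply, smul_apply, phase_single, smul_eq_mul]
  ring

lemma lap_sin_add_sin :
    lap (fun y => A * sin (phase a y) + B * sin (phase c y)) x =
      -(∑ j, 1 / a j ^ 2) * (A * sin (phase a x)) -
        (∑ j, 1 / c j ^ 2) * (B * sin (phase c x)) := by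
  simp only [lap, funext (pd_sin_add_sin A B a c _), pd_cos_add_cos, Finset.sum_mul,
    ← Finset.sum_neg_distrib, ← Finset.sum_sub_distrib]
  refine Finset.sum_congr rfl fun j _ => ?_
  ring

end PartialDerivatives

lemma td_exp_mul (γ c : ℝ) {t : ℝ} (ht : 0 ≤ t) :
    td (fun t => exp (γ * t) * c) t = γ * (exp (γ * t) * c) := by
  have h : HasDerivAt (fun t => exp (γ * t) * c) (exp (γ * t) * (γ * 1) * c) t :=
    (((hasDerivAt_id t).const_mul γ).exp).mul_const c
  rw [td, h.hasDerivWithinAt.derivWithin (uniqueDiffOn_Ici 0 t ht)]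
  ring

lemma sum_inv_sq_eq_mul_of_mul_eq_inv {ι : Type*} [Fintype ι] {a c : ι → ℝ} {K : ℝ}
    (h : ∀ i, c i * K = 1 / a i) : ∑ i, 1 / a i ^ 2 = K * ∑ i, c i / a i := by
  rw [Finset.mul_sum]
  refine Finset.sum_congr rfl fun i _ => ?_
  linear_combination (-(a i)⁻¹) * h i

section TwoWave

variable (b α : Fin 3 → Fin 2 → ℝ)

noncomputable def waveProfile (i : Fin 3) (x : Fin 3 → ℝ) : ℝ :=
  b i 0 * sin (phase (α · 0) x) + b i 1 * sin (phase (α · 1) x)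

noncomputable def pressureProfile (x : Fin 3 → ℝ) : ℝ :=
  cos (phase (α · 0) x) * cos (phase (α · 1) x)

variable {b α}

lemma pd_waveProfile (i j : Fin 3) (x : Fin 3 → ℝ) :
    pd (waveProfile b α i) j x =
      b i 0 * (α j 0)⁻¹ * cos (phase (α · 0) x) + b i 1 * (α j 1)⁻¹ * cos (phase (α · 1) x) :=
  pd_sin_add_sin ..

lemma pd_pressureProfile (i : Fin 3) (x : Fin 3 → ℝ) :
    pd (pressureProfile α) i x =
      -(sin (phase (α · 0) x) * cos (phase (α · 1) x) * (α i 0)⁻¹) -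
        cos (phase (α · 0) x) * sin (phase (α · 1) x) * (α i 1)⁻¹ :=
  pd_cos_mul_cos ..

lemma contDiff_waveProfile (i : Fin 3) : ContDiff ℝ ∞ (waveProfile b α i) := by
  unfold waveProfile
  fun_prop

lemma contDiff_pressureProfile : ContDiff ℝ ∞ (pressureProfile α) := by
  unfold pressureProfile
  fun_prop

lemma sum_inv_sq_eq_of_compat
    (hc1 : ∀ i : Fin 3, b i 0 * ∑ j : Fin 3, b j 1 / α j 0 = 1 / α i 1)
    (hc2 : ∀ i : Fin 3, b i 1 * ∑ j : Fin 3, b j 0 / α j 1 = 1 / α i 0) :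
    ∑ j, 1 / α j 0 ^ 2 = ∑ j, 1 / α j 1 ^ 2 := by
  rw [sum_inv_sq_eq_mul_of_mul_eq_inv hc2, sum_inv_sq_eq_mul_of_mul_eq_inv hc1, mul_comm]

lemma lap_waveProfile
    (hc1 : ∀ i : Fin 3, b i 0 * ∑ j : Fin 3, b j 1 / α j 0 = 1 / α i 1)
    (hc2 : ∀ i : Fin 3, b i 1 * ∑ j : Fin 3, b j 0 / α j 1 = 1 / α i 0) (i : Fin 3)
    (x : Fin 3 → ℝ) :
    lap (waveProfile b α i) x = -(∑ j, 1 / α j 0 ^ 2) * waveProfile b α i x := by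
  unfold waveProfile
  rw [lap_sin_add_sin, ← sum_inv_sq_eq_of_compat hc1 hc2]
  ring

lemma sum_pd_waveProfile (hbα : ∀ n : Fin 2, ∑ j : Fin 3, b j n / α j n = 0)
    (x : Fin 3 → ℝ) : ∑ i, pd (waveProfile b α i) i x = 0 := by
  calc ∑ i, pd (waveProfile b α i) i x
      = cos (phase (α · 0) x) * ∑ i, b i 0 / α i 0 +
          cos (phase (α · 1) x) * ∑ i, b i 1 / α i 1 := by
        simp only [pd_waveProfile, Finset.mul_sum, ← Finset.sum_add_distrib]
        refine Finset.sum_congr rfl fun i _ => ?_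
        ring
    _ = 0 := by simp [hbα]

lemma sum_mul_pd_waveProfile (hbα : ∀ n : Fin 2, ∑ j : Fin 3, b j n / α j n = 0)
    (hc1 : ∀ i : Fin 3, b i 0 * ∑ j : Fin 3, b j 1 / α j 0 = 1 / α i 1)
    (hc2 : ∀ i : Fin 3, b i 1 * ∑ j : Fin 3, b j 0 / α j 1 = 1 / α i 0) (i : Fin 3)
    (x : Fin 3 → ℝ) :
    ∑ j, waveProfile b α j x * pd (waveProfile b α i) j x = -pd (pressureProfile α) i x := by
  set s₀ := sin (phase (α · 0) x)
  set s₁ := sin (phase (α · 1) x)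
  set c₀ := cos (phase (α · 0) x)
  set c₁ := cos (phase (α · 1) x)
  have hexpand : ∑ j, waveProfile b α j x * pd (waveProfile b α i) j x =
      b i 0 * c₀ * (s₀ * ∑ j, b j 0 / α j 0 + s₁ * ∑ j, b j 1 / α j 0) +
        b i 1 * c₁ * (s₀ * ∑ j, b j 0 / α j 1 + s₁ * ∑ j, b j 1 / α j 1) := by
    simp only [Finset.mul_sum, ← Finset.sum_add_distrib]
    refine Finset.sum_congr rfl fun j _ => ?_
    simp only [waveProfile, pd_waveProfile]
    ring
  rw [hexpand, hbα 0, hbα 1, pd_pressureProfile]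
  linear_combination c₀ * s₁ * hc1 i + c₁ * s₀ * hc2 i

end TwoWave

theorem stmt10_general (ν : ℝ)
    (b α : Fin 3 → Fin 2 → ℝ)
    (hbα : ∀ n : Fin 2, ∑ j : Fin 3, b j n / α j n = 0)
    (hc1 : ∀ i : Fin 3, b i 0 * ∑ j : Fin 3, b j 1 / α j 0 = 1 / α i 1)
    (hc2 : ∀ i : Fin 3, b i 1 * ∑ j : Fin 3, b j 0 / α j 1 = 1 / α i 0)
    (β : Fin 2 → ℝ) (hβ : ∀ n, β n = -ν * ∑ j : Fin 3, 1 / (α j n) ^ 2)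
    (u : Fin 3 → (Fin 3 → ℝ) → ℝ → ℝ) (p : (Fin 3 → ℝ) → ℝ → ℝ)
    (hu : ∀ i x t, u i x t =
      b i 0 * Real.exp (β 0 * t) * Real.sin (∑ s : Fin 3, x s / α s 0) +
      b i 1 * Real.exp (β 0 * t) * Real.sin (∑ s : Fin 3, x s / α s 1))
    (hp : ∀ x t, p x t =
      Real.cos (∑ j : Fin 3, x j / α j 0) * Real.cos (∑ j : Fin 3, x j / α j 1) *
        Real.exp ((β 0 + β 1) * t)) :
    -- smoothness on ℝ³ × [0,∞)
    (∀ i : Fin 3, ContDiffOn ℝ (⊤ : ℕ∞)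
      (fun q : (Fin 3 → ℝ) × ℝ => u i q.1 q.2) (Set.univ ×ˢ Set.Ici 0)) ∧
    ContDiffOn ℝ (⊤ : ℕ∞)
      (fun q : (Fin 3 → ℝ) × ℝ => p q.1 q.2) (Set.univ ×ˢ Set.Ici 0) ∧
    -- Navier–Stokes with zero external force
    (∀ x : Fin 3 → ℝ, ∀ t : ℝ, 0 ≤ t → ∀ i : Fin 3,
      td (u i x) t + ∑ j : Fin 3, u j x t * pd (fun y => u i y t) j x =
        ν * lap (fun y => u i y t) x - pd (fun y => p y t) i x) ∧
    -- divergence-free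
    (∀ x : Fin 3 → ℝ, ∀ t : ℝ, 0 ≤ t →
      ∑ i : Fin 3, pd (fun y => u i y t) i x = 0) ∧
    -- initial condition
    (∀ x : Fin 3 → ℝ, ∀ i : Fin 3,
      u i x 0 = b i 0 * Real.sin (∑ s : Fin 3, x s / α s 0) +
                b i 1 * Real.sin (∑ s : Fin 3, x s / α s 1)) := by
  have hβ₁ : β 1 = β 0 := by rw [hβ, hβ, sum_inv_sq_eq_of_compat hc1 hc2]
  have hu' : u = fun i x t => exp (β 0 * t) * waveProfile b α i x := by
    ext i x t
    rw [hu, waveProfile, phase_apply, phase_apply]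
    ring
  have hp' : p = fun x t => exp (β 0 * t) ^ 2 * pressureProfile α x := by
    ext x t
    rw [hp, pressureProfile, phase_apply, phase_apply, hβ₁, ← exp_nat_mul]
    ring_nf
  subst hu' hp'
  refine ⟨fun i => ?_, ?_, fun x t ht i => ?_, fun x t _ => ?_, fun x i => ?_⟩
  · have := contDiff_waveProfile (b := b) (α := α) i
    exact ContDiff.contDiffOn (by fun_prop)
  · have := contDiff_pressureProfile (α := α)
    exact ContDiff.contDiffOn (by fun_prop)
  · simp only [td_exp_mul _ _ ht, pd_const_mul, lap_const_mul, lap_waveProfile hc1 hc2]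
    have hconv : ∑ j, exp (β 0 * t) * waveProfile b α j x *
          (exp (β 0 * t) * pd (waveProfile b α i) j x) =
        exp (β 0 * t) ^ 2 * -pd (pressureProfile α) i x := by
      rw [← sum_mul_pd_waveProfile hbα hc1 hc2, Finset.mul_sum]
      refine Finset.sum_congr rfl fun j _ => ?_
      ring
    rw [hconv, hβ 0]
    ring
  · simp only [pd_const_mul, ← Finset.mul_sum, sum_pd_waveProfile hbα, mul_zero]
  · simp [waveProfile, phase_apply]

/-- Lemma 6: the two-wave solution of Navier–Stokes with zero force, under the
compatibility conditions on `b_{i,n}` and `α_{i,n}`. -/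
theorem stmt10 (ν : ℝ) (hν : 0 < ν)
    (b α : Fin 3 → Fin 2 → ℝ) (hα : ∀ i n, α i n ≠ 0)
    (hbα : ∀ n : Fin 2, ∑ j : Fin 3, b j n / α j n = 0)
    (hc1 : ∀ i : Fin 3, b i 0 * ∑ j : Fin 3, b j 1 / α j 0 = 1 / α i 1)
    (hc2 : ∀ i : Fin 3, b i 1 * ∑ j : Fin 3, b j 0 / α j 1 = 1 / α i 0)
    (β : Fin 2 → ℝ) (hβ : ∀ n, β n = -ν * ∑ j : Fin 3, 1 / (α j n) ^ 2)
    (u : Fin 3 → (Fin 3 → ℝ) → ℝ → ℝ) (p : (Fin 3 → ℝ) → ℝ → ℝ)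
    (hu : ∀ i x t, u i x t =
      b i 0 * Real.exp (β 0 * t) * Real.sin (∑ s : Fin 3, x s / α s 0) +
      b i 1 * Real.exp (β 0 * t) * Real.sin (∑ s : Fin 3, x s / α s 1))
    (hp : ∀ x t, p x t =
      Real.cos (∑ j : Fin 3, x j / α j 0) * Real.cos (∑ j : Fin 3, x j / α j 1) *
        Real.exp ((β 0 + β 1) * t)) :
    -- smoothness on ℝ³ × [0,∞)
    (∀ i : Fin 3, ContDiffOn ℝ (⊤ : ℕ∞)
      (fun q : (Fin 3 → ℝ) × ℝ => u i q.1 q.2) (Set.univ ×ˢ Set.Ici 0)) ∧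
    ContDiffOn ℝ (⊤ : ℕ∞)
      (fun q : (Fin 3 → ℝ) × ℝ => p q.1 q.2) (Set.univ ×ˢ Set.Ici 0) ∧
    -- Navier–Stokes with zero external force
    (∀ x : Fin 3 → ℝ, ∀ t : ℝ, 0 ≤ t → ∀ i : Fin 3,
      td (u i x) t + ∑ j : Fin 3, u j x t * pd (fun y => u i y t) j x =
        ν * lap (fun y => u i y t) x - pd (fun y => p y t) i x) ∧
    -- divergence-free
    (∀ x : Fin 3 → ℝ, ∀ t : ℝ, 0 ≤ t →
      ∑ i : Fin 3, pd (fun y => u i y t) i x = 0) ∧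
    -- initial condition
    (∀ x : Fin 3 → ℝ, ∀ i : Fin 3,
      u i x 0 = b i 0 * Real.sin (∑ s : Fin 3, x s / α s 0) +
                b i 1 * Real.sin (∑ s : Fin 3, x s / α s 1)) :=
  stmt10_general ν b α hbα hc1 hc2 β hβ u p hu hp
end
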